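/- For every real g with 0 ≤ g < 2, the 7×7 matrix H(g) has 7 distinct real eigenvalues, namely 7 + m·√(4−g²) for m ∈ {−3,−2,−1,0,1,2,3}. -/

import Mathlib

/-!
`H(g)` splits into its even-index block (spin 3/2) and odd-index block (spin 1), each of the form
`7 + 4 J_z + 2 i g J_y`: a complexified rotation of `7 + 2 s J_z` with `s = √(4 - g²)`. Hence the
eigenvalues are `7 + m s`, and the eigenvectors are rotated weight vectors, polynomial in `g` and `s`
(for `m = 3` the coherent state `√(3 choose j) g^j (2 + s)^(3 - j)` on the even indices).
Only `m = 0, …, 3` need an explicit eigenvector: the reversal `i ↦ 6 - i` conjugates `H` to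
`14 - H`, which exchanges `7 + m s` and `7 - m s`. The eigenvalues are distinct because `s > 0`.
-/

open Matrix Real

noncomputable def Htoy (g : ℝ) : Matrix (Fin 7) (Fin 7) ℝ :=
  !![1, 0, Real.sqrt 3 * g, 0, 0, 0, 0;
     0, 3, 0, Real.sqrt 2 * g, 0, 0, 0;
     -(Real.sqrt 3 * g), 0, 5, 0, 2 * g, 0, 0;
     0, -(Real.sqrt 2 * g), 0, 7, 0, Real.sqrt 2 * g, 0;
     0, 0, -(2 * g), 0, 9, 0, Real.sqrt 3 * g;
     0, 0, 0, -(Real.sqrt 2 * g), 0, 11, 0;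
     0, 0, 0, 0, -(Real.sqrt 3 * g), 0, 13]

open Module End

theorem Matrix.hasEigenvalue_mulVecLin_of_mulVec_eq {n K : Type*} [Fintype n] [CommRing K]
    {A : Matrix n n K} {v : n → K} {μ : K} (hv : v ≠ 0) (h : A *ᵥ v = μ • v) :
    HasEigenvalue A.mulVecLin μ :=
  hasEigenvalue_of_hasEigenvector ⟨mem_eigenspace_iff.mpr h, hv⟩

theorem Matrix.hasEigenvalue_sub_of_submatrix_eq {n K : Type*} [Fintype n] [DecidableEq n]
    [CommRing K] {A : Matrix n n K} (e : n ≃ n) {c μ : K}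
    (hA : A.submatrix e e = c • 1 - A) (h : HasEigenvalue A.mulVecLin μ) :
    HasEigenvalue A.mulVecLin (c - μ) := by
  obtain ⟨v, hv⟩ := h.exists_hasEigenvector
  have hAv : A *ᵥ v = μ • v := mem_eigenspace_iff.mp hv.1
  have hreindexed : (c • 1 - A) *ᵥ (v ∘ e) = μ • (v ∘ e) := by
    rw [← hA, submatrix_mulVec_equiv, Function.comp_assoc, e.self_comp_symm, Function.comp_id,
      hAv]
    rfl
  refine hasEigenvalue_mulVecLin_of_mulVec_eq (v := v ∘ e) ?_ ?_
  · exact fun h0 => hv.2 (funext fun i => by simpa using congrFun h0 (e.symm i))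
  · rw [sub_mulVec, smul_mulVec, one_mulVec] at hreindexed
    rw [sub_smul, ← hreindexed]
    abel

theorem Htoy_submatrix_revPerm (g : ℝ) :
    (Htoy g).submatrix Fin.revPerm Fin.revPerm = (14 : ℝ) • 1 - Htoy g := by
  ext i j
  fin_cases i <;> fin_cases j <;> simp [Htoy] <;> norm_num

noncomputable def toyEigenvector (g s : ℝ) : Fin 4 → Fin 7 → ℝ :=
  ![![0, √2 * g, 0, 4, 0, √2 * g, 0],
    ![√3 * g ^ 2, 0, g * (6 + s), 0, (6 - s) * (2 + s), 0, √3 * g * (2 + s)],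
    ![0, g ^ 2, 0, √2 * g * (2 + s), 0, (2 + s) ^ 2, 0],
    ![g ^ 3, 0, √3 * g ^ 2 * (2 + s), 0, √3 * g * (2 + s) ^ 2, 0, (2 + s) ^ 3]]

theorem Htoy_mulVec_toyEigenvector {g s : ℝ} (hs : s ^ 2 = 4 - g ^ 2) (k : Fin 4) :
    Htoy g *ᵥ toyEigenvector g s k = (7 + (k : ℝ) * s) • toyEigenvector g s k := by
  have h3 : √3 ^ 2 = 3 := Real.sq_sqrt (by norm_num)
  have h2 : √2 ^ 2 = 2 := Real.sq_sqrt (by norm_num)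
  ext i
  fin_cases k <;> fin_cases i <;>
    simp only [Htoy, toyEigenvector, mulVec, dotProduct, Fin.sum_univ_succ, Fin.sum_univ_zero,
      of_apply, cons_val', cons_val_fin_one, cons_val, cons_val_zero, cons_val_one, cons_val_succ,
      Pi.smul_apply, smul_eq_mul, Fin.isValue, Fin.reduceFinMk, Fin.zero_eta, Fin.mk_one] <;>
    grind

theorem toyEigenvector_ne_zero {g s : ℝ} (hs0 : 0 ≤ s) (hs2 : s ≤ 2) (k : Fin 4) :
    toyEigenvector g s k ≠ 0 := by
  fin_cases k <;> intro h
  · exact four_ne_zero (congrFun h 3)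
  · exact (mul_pos (by linarith) (by linarith) : 0 < (6 - s) * (2 + s)).ne' (congrFun h 4)
  · exact (pow_pos (by linarith) 2 : 0 < (2 + s) ^ 2).ne' (congrFun h 5)
  · exact (pow_pos (by linarith) 3 : 0 < (2 + s) ^ 3).ne' (congrFun h 6)

theorem Htoy_hasEigenvalue_seven_add_and_seven_sub {g : ℝ} (hg : g ^ 2 ≤ 4) {k : ℕ} (hk : k ≤ 3) :
    HasEigenvalue (Htoy g).mulVecLin (7 + k * √(4 - g ^ 2)) ∧
      HasEigenvalue (Htoy g).mulVecLin (7 - k * √(4 - g ^ 2)) := by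
  set s := √(4 - g ^ 2)
  have hs2 : s ≤ 2 := Real.sqrt_le_iff.mpr ⟨by norm_num, by nlinarith⟩
  have hadd : HasEigenvalue (Htoy g).mulVecLin (7 + k * s) :=
    hasEigenvalue_mulVecLin_of_mulVec_eq
      (toyEigenvector_ne_zero (Real.sqrt_nonneg _) hs2 ⟨k, by omega⟩)
      (Htoy_mulVec_toyEigenvector (Real.sq_sqrt (by linarith)) ⟨k, by omega⟩)
  refine ⟨hadd, ?_⟩
  convert hasEigenvalue_sub_of_submatrix_eq Fin.revPerm (Htoy_submatrix_revPerm g) hadd using 1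
  ring

theorem stmt_5 (g : ℝ) (hg0 : 0 ≤ g) (hg2 : g < 2) :
    (∀ m : ℤ, m ∈ Finset.Icc (-3 : ℤ) 3 →
      Module.End.HasEigenvalue (Htoy g).mulVecLin
        ((7 : ℝ) + (m : ℝ) * Real.sqrt (4 - g ^ 2))) ∧
    Set.InjOn (fun m : ℤ => (7 : ℝ) + (m : ℝ) * Real.sqrt (4 - g ^ 2))
      (Set.Icc (-3 : ℤ) 3) := by
  have hg : g ^ 2 < 4 := by nlinarith
  refine ⟨fun m hm => ?_, fun a _ b _ hab => ?_⟩
  · rw [Finset.mem_Icc] at hm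
    obtain ⟨k, rfl | rfl⟩ := m.eq_nat_or_neg
    · simpa using (Htoy_hasEigenvalue_seven_add_and_seven_sub hg.le (k := k) (by omega)).1
    · simpa [sub_eq_add_neg] using
        (Htoy_hasEigenvalue_seven_add_and_seven_sub hg.le (k := k) (by omega)).2
  · have hs : √(4 - g ^ 2) ≠ 0 := (Real.sqrt_pos.mpr (by linarith)).ne'
    exact_mod_cast mul_right_cancel₀ hs (add_left_cancel hab)
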